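/- arXiv:2212.02049 — 3 statements merged into one kernel-verified Lean document; each statement's English description precedes it below -/
import Mathlib

section
/- Let $h : \mathbb{R}_{>0} \to \mathbb{R}$ be twice differentiable with $h' > 0$ and $h'' \geq 0$, and fix $\nu > 0$. Define $J(s) = h(\nu) + \nu h'(\nu)\left(1 - \frac{\nu}{s}\right) - h(s)$ for $s > 0$. Then $s = \nu$ is the unique global maximizer of $J$ on $\mathbb{R}_{>0}$; in particular $J(\nu) = 0$ and $J(s) < 0$ for all $s > 0$ with $s \neq \nu$. -/
/-!
Since `h'' ≥ 0`, `h` lies above its tangent at `ν`: `h s - h ν ≥ h' ν (s - ν)`. Hence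
`J s ≤ ν h'(ν) (1 - ν / s) - h'(ν) (s - ν) = -h'(ν) (s - ν)² / s`, which is negative for
`s ≠ ν` because `h' ν > 0`.
-/

open Set

lemma convexOn_of_hasDerivAt2_nonneg {D : Set ℝ} (hD : Convex ℝ D) (hDo : IsOpen D)
    {f f' f'' : ℝ → ℝ} (hf' : ∀ x ∈ D, HasDerivAt f (f' x) x)
    (hf'' : ∀ x ∈ D, HasDerivAt f' (f'' x) x) (hf''₀ : ∀ x ∈ D, 0 ≤ f'' x) :
    ConvexOn ℝ D f := by
  refine convexOn_of_hasDerivWithinAt2_nonneg (f' := f') (f'' := f'') hD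
    (fun x hx ↦ (hf' x hx).continuousAt.continuousWithinAt) ?_ ?_ ?_ <;>
    rw [hDo.interior_eq]
  · exact fun x hx ↦ (hf' x hx).hasDerivWithinAt
  · exact fun x hx ↦ (hf'' x hx).hasDerivWithinAt
  · exact hf''₀

lemma ConvexOn.mul_sub_le_sub_of_hasDerivAt {S : Set ℝ} {f : ℝ → ℝ} {x y f' : ℝ}
    (hfc : ConvexOn ℝ S f) (hx : x ∈ S) (hy : y ∈ S) (hf : HasDerivAt f f' x) :
    f' * (y - x) ≤ f y - f x := by
  rcases lt_trichotomy x y with hxy | rfl | hyx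
  · have := hfc.le_slope_of_hasDerivAt hx hy hxy hf
    rwa [slope_def_field, le_div_iff₀ (sub_pos.mpr hxy)] at this
  · simp
  · have := hfc.slope_le_of_hasDerivAt hy hx hyx hf
    rw [slope_def_field, div_le_iff₀ (sub_pos.mpr hyx)] at this
    linarith

/-- With `h` twice differentiable, `h' > 0` and `h'' ≥ 0` on `ℝ>0`,
`s = ν` is the unique global maximizer of `J(s) = h(ν) + ν h'(ν)(1 - ν/s) - h(s)` on
`ℝ>0`: `J(ν) = 0` and `J(s) < 0` for all `s > 0`, `s ≠ ν`. -/
theorem deviation_utility_unique_maximizer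
    (h h' h'' : ℝ → ℝ)
    (hd1 : ∀ s > (0:ℝ), HasDerivAt h (h' s) s)
    (hd2 : ∀ s > (0:ℝ), HasDerivAt h' (h'' s) s)
    (hpos : ∀ s > (0:ℝ), 0 < h' s)
    (hconv : ∀ s > (0:ℝ), 0 ≤ h'' s)
    (ν : ℝ) (hν : 0 < ν)
    (J : ℝ → ℝ) (hJ : ∀ s, J s = h ν + ν * h' ν * (1 - ν / s) - h s) :
    J ν = 0 ∧ ∀ s > (0:ℝ), s ≠ ν → J s < 0 := by
  refine ⟨by rw [hJ, div_self hν.ne']; ring, fun s hs hsν ↦ ?_⟩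
  have hconvex : ConvexOn ℝ (Ioi 0) h :=
    convexOn_of_hasDerivAt2_nonneg (convex_Ioi 0) isOpen_Ioi hd1 hd2 hconv
  have htangent : h' ν * (s - ν) ≤ h s - h ν :=
    hconvex.mul_sub_le_sub_of_hasDerivAt hν hs (hd1 ν hν)
  have hgap : 0 < h' ν * (s - ν) ^ 2 / s :=
    div_pos (mul_pos (hpos ν hν) (sq_pos_of_ne_zero (sub_ne_zero.mpr hsν))) hs
  have hid : ν * h' ν * (1 - ν / s) = h' ν * (s - ν) - h' ν * (s - ν) ^ 2 / s := by
    field_simp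
    ring
  rw [hJ, hid]
  linarith
end

section
/- (Budget balance) Let $K \geq 2$ agents have i.i.d.-based stochastic gradients $X_1,\dots,X_K$, independent with common mean $m$ and variances $\mathbb{V}[X_i] = \sigma^2/\nu$ (all agents cooperative with minibatch size $\nu \in \mathbb{Z}_{>0}$, $\sigma^2 > 0$). Let $h:\mathbb{R}_{>0}\to\mathbb{R}$ be differentiable, and define the reward $R_k = h(\nu) + h'(\nu)\left(\nu \frac{K}{K-1} - \frac{\nu^2}{\sigma^2}\|X_k - \widehat m_{-k}\|^2\right)$ with $\widehat m_{-k} = \frac{1}{K-1}\sum_{i\neq k} X_i$. Then $\mathbb{E}[R_k] = h(\nu)$ for every agent $k$. -/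
/-!
With weights `a k = 1` and `a i = -1/(K-1)` for `i ≠ k`, the deviation `X k - m̂₋ₖ` is
`∑ i, a i • (X i - m)`, because the weights sum to zero. Independence kills the cross terms of
its squared norm, so `E‖X k - m̂₋ₖ‖² = (σ²/ν) ∑ a i ^ 2 = (σ²/ν) K/(K-1)`. Multiplied by `ν²/σ²`
this is exactly `ν K/(K-1)`, so the bracket multiplying `h'(ν)` has expectation zero.
-/

open MeasureTheory ProbabilityTheory Finset

theorem norm_sum_smul_sq {ι E : Type*} [NormedAddCommGroup E] [InnerProductSpace ℝ E]
    (s : Finset ι) (a : ι → ℝ) (y : ι → E) :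
    ‖∑ i ∈ s, a i • y i‖ ^ 2 = ∑ i ∈ s, ∑ j ∈ s, a i * a j * inner ℝ (y i) (y j) := by
  simp_rw [← real_inner_self_eq_norm_sq, sum_inner, inner_sum, real_inner_smul_left,
    real_inner_smul_right, mul_assoc]

theorem sum_smul_sub_const {ι M : Type*} [AddCommGroup M] [Module ℝ M]
    (s : Finset ι) (a : ι → ℝ) (x : ι → M) (m : M) (ha : ∑ i ∈ s, a i = 0) :
    ∑ i ∈ s, a i • (x i - m) = ∑ i ∈ s, a i • x i := by
  simp [smul_sub, sum_sub_distrib, ← sum_smul, ha]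

theorem sum_ite_smul_eq_sub_smul_sum_erase {ι M : Type*} [Fintype ι] [DecidableEq ι]
    [AddCommGroup M] [Module ℝ M] (k : ι) (c : ℝ) (x : ι → M) :
    ∑ i, (if i = k then 1 else -c) • x i = x k - c • ∑ i ∈ univ.erase k, x i := by
  rw [← add_sum_erase _ _ (mem_univ k), if_pos rfl, one_smul, smul_sum, sub_eq_add_neg,
    ← sum_neg_distrib]
  congr 1
  refine sum_congr rfl fun i hi => ?_
  rw [if_neg (ne_of_mem_erase hi), neg_smul]

theorem memLp_two_of_integrable_norm_sub_sq {Ω F : Type*} [MeasurableSpace Ω] {μ : Measure Ω}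
    [IsFiniteMeasure μ] [NormedAddCommGroup F] {f : Ω → F} {m : F}
    (hf : AEStronglyMeasurable f μ) (h : Integrable (fun ω => ‖f ω - m‖ ^ 2) μ) :
    MemLp f 2 μ := by
  have hc : MemLp (fun ω => f ω - m) 2 μ :=
    (memLp_two_iff_integrable_sq_norm (hf.sub aestronglyMeasurable_const)).2 h
  simpa only [Pi.add_def, sub_add_cancel] using hc.add (memLp_const m)

theorem integral_const_add_mul_const_sub_mul {Ω : Type*} [MeasurableSpace Ω] {μ : Measure Ω}
    [IsProbabilityMeasure μ] {f : Ω → ℝ} (hf : Integrable f μ) (a b c e : ℝ) :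
    ∫ ω, a + b * (c - e * f ω) ∂μ = a + b * (c - e * ∫ ω, f ω ∂μ) := by
  have hef : Integrable (fun ω => e * f ω) μ := hf.const_mul e
  have hcef : Integrable (fun ω => c - e * f ω) μ := (integrable_const c).sub hef
  rw [integral_add (integrable_const a) (hcef.const_mul b), integral_const_mul,
    integral_sub (integrable_const c) hef, integral_const_mul]
  simp

section

variable {Ω ι E : Type*} [MeasurableSpace Ω] {μ : Measure Ω}
  [NormedAddCommGroup E] [InnerProductSpace ℝ E] [MeasurableSpace E] [BorelSpace E]

theorem integrable_inner_of_pairwise_indepFun [IsFiniteMeasure μ] {Y : ι → Ω → E}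
    (hindep : Pairwise fun i j => IndepFun (Y i) (Y j) μ) (hY : ∀ i, MemLp (Y i) 2 μ) (i j : ι) :
    Integrable (fun ω => inner ℝ (Y i ω) (Y j ω)) μ := by
  obtain rfl | hij := eq_or_ne i j
  · simpa only [real_inner_self_eq_norm_sq] using (hY i).integrable_norm_pow two_ne_zero
  · exact (hindep hij).integrable_bilin ((hY i).integrable one_le_two)
      ((hY j).integrable one_le_two) (innerSL ℝ)

variable [CompleteSpace E]

theorem integral_inner_of_pairwise_indepFun [IsFiniteMeasure μ] {Y : ι → Ω → E}
    (hindep : Pairwise fun i j => IndepFun (Y i) (Y j) μ) (hY : ∀ i, MemLp (Y i) 2 μ)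
    (hmean : ∀ i, μ[Y i] = 0) (i j : ι) [Decidable (i = j)] :
    ∫ ω, inner ℝ (Y i ω) (Y j ω) ∂μ = if i = j then ∫ ω, ‖Y i ω‖ ^ 2 ∂μ else 0 := by
  split_ifs with hij
  · subst hij
    simp_rw [real_inner_self_eq_norm_sq]
  · have : ∫ ω, inner ℝ (Y i ω) (Y j ω) ∂μ = inner ℝ μ[Y i] μ[Y j] :=
      (hindep hij).integral_bilin ((hY i).integrable one_le_two)
        ((hY j).integrable one_le_two) (innerSL ℝ)
    rw [this, hmean, inner_zero_left]

theorem integral_norm_sum_smul_sq [IsFiniteMeasure μ] {Y : ι → Ω → E}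
    (hindep : Pairwise fun i j => IndepFun (Y i) (Y j) μ) (hY : ∀ i, MemLp (Y i) 2 μ)
    (hmean : ∀ i, μ[Y i] = 0) (s : Finset ι) (a : ι → ℝ) :
    ∫ ω, ‖∑ i ∈ s, a i • Y i ω‖ ^ 2 ∂μ = ∑ i ∈ s, a i ^ 2 * ∫ ω, ‖Y i ω‖ ^ 2 ∂μ := by
  classical
  have hint := integrable_inner_of_pairwise_indepFun hindep hY
  simp_rw [norm_sum_smul_sq]
  rw [integral_finsetSum _ fun i _ => integrable_finsetSum _ fun j _ => (hint i j).const_mul _]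
  refine sum_congr rfl fun i hi => ?_
  rw [integral_finsetSum _ fun j _ => (hint i j).const_mul _]
  simp_rw [integral_const_mul, integral_inner_of_pairwise_indepFun hindep hY hmean]
  simp [hi, sq]

theorem integral_norm_sub_smul_sum_erase_sq [Fintype ι] [DecidableEq ι] [IsProbabilityMeasure μ]
    (hι : 2 ≤ Fintype.card ι) {X : ι → Ω → E} {m : E} {v : ℝ}
    (hindep : Pairwise fun i j => IndepFun (X i) (X j) μ) (hX : ∀ i, MemLp (X i) 2 μ)
    (hmean : ∀ i, μ[X i] = m) (hvar : ∀ i, ∫ ω, ‖X i ω - m‖ ^ 2 ∂μ = v) (k : ι) :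
    ∫ ω, ‖X k ω - ((Fintype.card ι : ℝ) - 1)⁻¹ • ∑ i ∈ univ.erase k, X i ω‖ ^ 2 ∂μ
      = v * (Fintype.card ι / ((Fintype.card ι : ℝ) - 1)) := by
  have hn : (Fintype.card ι : ℝ) - 1 ≠ 0 := by
    have : (2 : ℝ) ≤ Fintype.card ι := by exact_mod_cast hι
    linarith
  set n : ℝ := (Fintype.card ι : ℝ)
  set c := (n - 1)⁻¹ with hc
  set a : ι → ℝ := fun i => if i = k then 1 else -c
  have hcard : ((univ.erase k).card : ℝ) = n - 1 := by
    rw [card_erase_of_mem (mem_univ k), card_univ, Nat.cast_sub (by omega), Nat.cast_one]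
  have ha : ∑ i, a i = 0 := by
    have := sum_ite_smul_eq_sub_smul_sum_erase k c (fun _ => (1 : ℝ))
    simp only [smul_eq_mul, mul_one, sum_const, hcard, nsmul_eq_mul] at this
    rw [this, inv_mul_cancel₀ hn, sub_self]
  have ha2 : ∑ i, a i ^ 2 = n / (n - 1) := by
    have h : ∑ i, a i • a i = a k - c • (0 - a k) := by
      rw [← ha, ← sum_erase_eq_sub (mem_univ k)]
      exact sum_ite_smul_eq_sub_smul_sum_erase k c a
    simp only [smul_eq_mul, ← sq, show a k = 1 from if_pos rfl] at h
    rw [h, zero_sub, mul_neg_one, sub_neg_eq_add, hc]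
    field_simp
    ring
  have hcenter : ∀ ω, X k ω - c • ∑ i ∈ univ.erase k, X i ω = ∑ i, a i • (X i ω - m) := fun ω => by
    rw [sum_smul_sub_const _ _ _ _ ha, sum_ite_smul_eq_sub_smul_sum_erase]
  simp_rw [hcenter]
  rw [integral_norm_sum_smul_sq (Y := fun i ω => X i ω - m)]
  · simp_rw [hvar, ← sum_mul, ha2, mul_comm]
  · exact fun i j hij => (hindep hij).comp (measurable_id.sub_const m) (measurable_id.sub_const m)
  · exact fun i => (hX i).sub (memLp_const m)
  · intro i
    rw [integral_sub ((hX i).integrable one_le_two) (integrable_const m), hmean, integral_const]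
    simp

end

theorem budget_balance_general
    {Ω : Type*} [MeasurableSpace Ω] (μ : Measure Ω) [IsProbabilityMeasure μ]
    {d K : ℕ} (hK : 2 ≤ K)
    (X : Fin K → Ω → EuclideanSpace ℝ (Fin d))
    (m : EuclideanSpace ℝ (Fin d)) (σ2 : ℝ) (hσ2 : 0 < σ2)
    (ν : ℕ) (hν : 1 ≤ ν)
    (hindep : iIndepFun X μ)
    (hint : ∀ i, Integrable (X i) μ)
    (hmean : ∀ i, ∫ ω, X i ω ∂μ = m)
    (hL2 : ∀ i, Integrable (fun ω => ‖X i ω - m‖ ^ 2) μ)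
    (hvar : ∀ i, ∫ ω, ‖X i ω - m‖ ^ 2 ∂μ = σ2 / ν)
    (h h' : ℝ → ℝ)
    (k : Fin K) :
    ∫ ω, (h ν + h' ν * (ν * (K / ((K : ℝ) - 1)) -
        ν ^ 2 / σ2 *
          ‖X k ω - ((K : ℝ) - 1)⁻¹ • ∑ i ∈ Finset.univ.erase k, X i ω‖ ^ 2)) ∂μ
      = h ν := by
  have hX : ∀ i, MemLp (X i) 2 μ := fun i =>
    memLp_two_of_integrable_norm_sub_sq (hint i).aestronglyMeasurable (hL2 i)
  have hQ := integral_norm_sub_smul_sum_erase_sq (X := X) (by simpa using hK)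
    (fun i j hij => hindep.indepFun hij) hX hmean hvar k
  have hdev : MemLp (fun ω => X k ω - ((K : ℝ) - 1)⁻¹ • ∑ i ∈ univ.erase k, X i ω) 2 μ :=
    (hX k).sub ((memLp_finsetSum (univ.erase k) fun i _ => hX i).const_smul ((K : ℝ) - 1)⁻¹)
  have hQint := hdev.integrable_norm_pow two_ne_zero
  simp only [Fintype.card_fin] at hQ
  rw [integral_const_add_mul_const_sub_mul hQint, hQ]
  have hνpos : (0 : ℝ) < ν := by exact_mod_cast hν
  field_simp
  ring

/-- **Budget balance.** In the cooperative equilibrium (all `K ≥ 2` agents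
use minibatch size `ν`, so each gradient has mean `m` and variance `σ²/ν`), the
output-agreement reward
`R_k = h(ν) + h'(ν)(ν K/(K-1) - (ν²/σ²)‖X_k - m̂₋ₖ‖²)` has expectation `h(ν)`. -/
theorem budget_balance
    {Ω : Type*} [MeasurableSpace Ω] (μ : Measure Ω) [IsProbabilityMeasure μ]
    {d K : ℕ} (hK : 2 ≤ K)
    (X : Fin K → Ω → EuclideanSpace ℝ (Fin d))
    (m : EuclideanSpace ℝ (Fin d)) (σ2 : ℝ) (hσ2 : 0 < σ2)
    (ν : ℕ) (hν : 1 ≤ ν)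
    (hmeas : ∀ i, Measurable (X i))
    (hindep : iIndepFun X μ)
    (hint : ∀ i, Integrable (X i) μ)
    (hmean : ∀ i, ∫ ω, X i ω ∂μ = m)
    (hL2 : ∀ i, Integrable (fun ω => ‖X i ω - m‖ ^ 2) μ)
    (hvar : ∀ i, ∫ ω, ‖X i ω - m‖ ^ 2 ∂μ = σ2 / ν)
    (h h' : ℝ → ℝ) (hd : ∀ s > (0:ℝ), HasDerivAt h (h' s) s)
    (k : Fin K) :
    ∫ ω, (h ν + h' ν * (ν * (K / ((K : ℝ) - 1)) -
        ν ^ 2 / σ2 *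
          ‖X k ω - ((K : ℝ) - 1)⁻¹ • ∑ i ∈ Finset.univ.erase k, X i ω‖ ^ 2)) ∂μ
      = h ν :=
  budget_balance_general μ hK X m σ2 hσ2 ν hν hindep hint hmean hL2 hvar h h' k
end

section
/- (Theorem 1, cooperative Nash equilibrium) Let $K \geq 2$, $\sigma^2 > 0$, $\nu \in \{1,\dots,n\}$, and let $h:\mathbb{R}_{>0}\to\mathbb{R}$ be twice differentiable, strictly increasing ($h'>0$) and convex ($h''\geq 0$), extended by $h(0)=0$ with $h(s)>0$ for $s>0$. For each agent $k$ and deviation $s \in \{0,1,\dots,n\}$ (with other agents at $\nu$), the expected utility is $u_k(s) = h(\nu) + \nu h'(\nu)(1 - \nu/s) - h(s)$ for $s \geq 1$ and $u_k(0) = 0$. Then $u_k(\nu) = 0 \geq u_k(s)$ for all $s \in \{0,1,\dots,n\}$; i.e., the cooperative choice $s = \nu$ is a best response. -/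
/-! Convexity puts `h` above its tangent at `ν`, so `h s ≥ h ν + h' ν (s - ν)`. Substituting this
into `u s` leaves `ν h'(ν) (1 - ν / s) - h'(ν) (s - ν) = -h'(ν) (s - ν)² / s`, which is `≤ 0`
because `h'(ν) ≥ 0`; at `s = ν` every term cancels. -/

open Set

theorem ConvexOn.add_mul_sub_le_of_hasDerivAt {S : Set ℝ} {f : ℝ → ℝ} {f' x y : ℝ}
    (hfc : ConvexOn ℝ S f) (hx : x ∈ S) (hy : y ∈ S) (hf : HasDerivAt f f' x) :
    f x + f' * (y - x) ≤ f y := by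
  rcases lt_trichotomy x y with hxy | rfl | hyx
  · have := hfc.le_slope_of_hasDerivAt hx hy hxy hf
    rw [slope_def_field, le_div_iff₀ (sub_pos.2 hxy)] at this
    linarith
  · simp
  · have := hfc.slope_le_of_hasDerivAt hy hx hyx hf
    rw [slope_def_field, div_le_iff₀ (sub_pos.2 hyx)] at this
    linarith

theorem convexOn_Ioi_of_hasDerivAt2_nonneg {f f' f'' : ℝ → ℝ} {a : ℝ}
    (hf' : ∀ t > a, HasDerivAt f (f' t) t) (hf'' : ∀ t > a, HasDerivAt f' (f'' t) t)
    (hf''₀ : ∀ t > a, 0 ≤ f'' t) : ConvexOn ℝ (Ioi a) f := by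
  refine convexOn_of_hasDerivWithinAt2_nonneg (f' := f') (f'' := f'') (convex_Ioi a)
    (fun t ht => (hf' t ht).continuousAt.continuousWithinAt) ?_ ?_ ?_ <;>
    simp only [interior_Ioi]
  · exact fun t ht => (hf' t ht).hasDerivWithinAt
  · exact fun t ht => (hf'' t ht).hasDerivWithinAt
  · exact hf''₀

/-- The gain of deviating from `a` to `s` under the output-agreement reward with convex cost `f`. -/
theorem add_mul_one_sub_div_sub_nonpos {f : ℝ → ℝ} {f' a s : ℝ}
    (hfc : ConvexOn ℝ (Ioi 0) f) (ha : 0 < a) (hs : 0 < s) (hf : HasDerivAt f f' a)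
    (hf'₀ : 0 ≤ f') :
    f a + a * f' * (1 - a / s) - f s ≤ 0 := by
  have tangent := hfc.add_mul_sub_le_of_hasDerivAt ha hs hf
  have gain : a * f' * (1 - a / s) - f' * (s - a) = -(f' * (s - a) ^ 2 / s) := by
    field_simp
    ring
  have : 0 ≤ f' * (s - a) ^ 2 / s := by positivity
  linarith

theorem cooperative_nash_equilibrium_general
    (h h' h'' : ℝ → ℝ)
    (hd1 : ∀ t > (0:ℝ), HasDerivAt h (h' t) t)
    (hd2 : ∀ t > (0:ℝ), HasDerivAt h' (h'' t) t)
    (hpos : ∀ t > (0:ℝ), 0 < h' t)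
    (hconv : ∀ t > (0:ℝ), 0 ≤ h'' t)
    (n ν : ℕ) (hν1 : 1 ≤ ν)
    (u : ℕ → ℝ)
    (hu0 : u 0 = 0)
    (hu : ∀ s : ℕ, 1 ≤ s → u s = h ν + ν * h' ν * (1 - (ν : ℝ) / s) - h s) :
    u ν = 0 ∧ ∀ s : ℕ, s ≤ n → u s ≤ u ν := by
  have hν : (0 : ℝ) < ν := by exact_mod_cast hν1
  have huν : u ν = 0 := by simp [hu ν hν1, hν.ne']
  refine ⟨huν, fun s _ => ?_⟩
  rcases Nat.eq_zero_or_pos s with rfl | hs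
  · rw [hu0, huν]
  rw [hu s hs, huν]
  exact add_mul_one_sub_div_sub_nonpos (convexOn_Ioi_of_hasDerivAt2_nonneg hd1 hd2 hconv) hν
    (by exact_mod_cast hs) (hd1 ν hν) (hpos ν hν).le

/-- **Theorem 1, cooperative Nash equilibrium.** With the cost function
`h` twice differentiable, strictly increasing and convex on `ℝ>0`, `h(0) = 0`,
`h > 0` on `ℝ>0`, and the expected utility `u(s) = h(ν) + ν h'(ν)(1 - ν/s) - h(s)` for
integer deviations `1 ≤ s ≤ n` and `u(0) = 0` for nonparticipation, the cooperative
choice `s = ν` is a best response: `u(ν) = 0 ≥ u(s)` for all `s ∈ {0,…,n}`. -/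
theorem cooperative_nash_equilibrium
    (h h' h'' : ℝ → ℝ)
    (hd1 : ∀ t > (0:ℝ), HasDerivAt h (h' t) t)
    (hd2 : ∀ t > (0:ℝ), HasDerivAt h' (h'' t) t)
    (hpos : ∀ t > (0:ℝ), 0 < h' t)
    (hconv : ∀ t > (0:ℝ), 0 ≤ h'' t)
    (h0 : h 0 = 0) (hposval : ∀ t > (0:ℝ), 0 < h t)
    (n ν : ℕ) (hν1 : 1 ≤ ν) (hνn : ν ≤ n)
    (u : ℕ → ℝ)
    (hu0 : u 0 = 0)
    (hu : ∀ s : ℕ, 1 ≤ s → u s = h ν + ν * h' ν * (1 - (ν : ℝ) / s) - h s) :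
    u ν = 0 ∧ ∀ s : ℕ, s ≤ n → u s ≤ u ν :=
  cooperative_nash_equilibrium_general h h' h'' hd1 hd2 hpos hconv n ν hν1 u hu0 hu
end
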